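/- Let $A$ and $B$ be random variables taking values in finite sets $\mathscr{A}$ and $\mathscr{B}$. Then $\mathbf{K}\big(\mathcal{L}(A,B)\,\big\|\,\mathcal{L}(A)\otimes\mathcal{L}(B)\big) \le 2 \sum_{a\in\mathscr{A}} d_{TV}\big(\mathcal{L}(B\mid A=a),\,\mathcal{L}(B)\big)$. -/

import Mathlib

open MeasureTheory ProbabilityTheory
open scoped ENNReal NNReal

/- The Kullback-Leibler divergence, valued in `ℝ≥0∞` (appropriate for probability measures). -/
open Classical in
noncomputable def klDiv {α : Type*} [MeasurableSpace α] (μ ν : Measure α) : ℝ≥0∞ :=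
  if μ ≪ ν ∧ Integrable (llr μ ν) μ then ENNReal.ofReal (∫ x, llr μ ν x ∂μ) else ⊤

/-- Total variation distance between two measures on a finite measurable space with measurable
singletons: `(1/2) ∑_b |P{b} - Q{b}|`. -/
noncomputable def dTVfin {β : Type*} [Fintype β] [MeasurableSpace β]
    (P Q : Measure β) : ℝ :=
  (1 / 2) * ∑ b : β, |(P {b}).toReal - (Q {b}).toReal|

/-!
On a finite space the joint law `p(a, b)` is absolutely continuous with respect to
`p(a) p(b)`, so the divergence is the finite sum `∑ p(a, b) log (p(b | a) / p(b))`.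
Each term is at most `|p(b | a) - p(b)|`: it is nonpositive when `p(b | a) ≤ p(b)`, and otherwise
`log y ≤ y - 1` bounds it by `(p(a, b) / p(b)) (p(b | a) - p(b))`, where `p(a, b) ≤ p(b)`.
Summing over `b` gives `2 d_TV(L(B | A = a), L(B))`.
-/

lemma mul_log_div_le_abs_sub {p x r : ℝ} (hp : 0 ≤ p) (hpr : p ≤ r) (hx : 0 ≤ x) :
    p * Real.log (x / r) ≤ |x - r| := by
  rcases hp.eq_or_lt with rfl | hp
  · simp
  have hr : 0 < r := hp.trans_le hpr
  rcases le_or_gt x r with hxr | hrx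
  · have hlog : Real.log (x / r) ≤ 0 :=
      Real.log_nonpos (div_nonneg hx hr.le) ((div_le_one hr).2 hxr)
    exact (mul_nonpos_of_nonneg_of_nonpos hp.le hlog).trans (abs_nonneg _)
  · calc p * Real.log (x / r) ≤ p * (x / r - 1) := by
          gcongr; exact Real.log_le_sub_one_of_pos (div_pos (hr.trans hrx) hr)
      _ = p / r * (x - r) := by field_simp
      _ ≤ 1 * (x - r) :=
          mul_le_mul_of_nonneg_right (div_le_one_of_le₀ hpr hr.le) (by linarith)
      _ ≤ |x - r| := by rw [one_mul]; exact le_abs_self _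

section Discrete

variable {α : Type*} [MeasurableSpace α] {μ ν : Measure α}

lemma Measure.absolutelyContinuous_of_forall_singleton [Countable α]
    (h : ∀ x, ν {x} = 0 → μ {x} = 0) : μ ≪ ν := by
  intro s hs
  have hsub : s ⊆ ⋃ x ∈ s, ({x} : Set α) := by simp
  refine measure_mono_null hsub ((measure_biUnion_null_iff s.to_countable).2 fun x hx => ?_)
  exact h x (measure_mono_null (Set.singleton_subset_iff.2 hx) hs)

lemma two_mul_dTVfin [Fintype α] (P Q : Measure α) :
    2 * dTVfin P Q = ∑ x, |P.real {x} - Q.real {x}| := by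
  rw [dTVfin, ← mul_assoc, mul_one_div_cancel two_ne_zero, one_mul]
  rfl

variable [MeasurableSingletonClass α]

lemma llr_apply_singleton [IsFiniteMeasure μ] [IsFiniteMeasure ν] (hμν : μ ≪ ν) {x : α}
    (hx : μ {x} ≠ 0) : llr μ ν x = Real.log (μ.real {x} / ν.real {x}) := by
  have hνx : ν {x} ≠ 0 := fun h => hx (hμν h)
  have hrn : μ.rnDeriv ν x = μ {x} / ν {x} := by
    rw [ENNReal.eq_div_iff hνx (measure_ne_top _ _), mul_comm, ← lintegral_singleton]
    exact Measure.setLIntegral_rnDeriv hμν {x}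
  simp only [llr_def, hrn, ENNReal.toReal_div, measureReal_def]

lemma klDiv_eq_sum_of_fintype [Fintype α] [IsFiniteMeasure μ] [IsFiniteMeasure ν] (hμν : μ ≪ ν) :
    klDiv μ ν = ENNReal.ofReal (∑ x, μ.real {x} * Real.log (μ.real {x} / ν.real {x})) := by
  rw [klDiv, if_pos ⟨hμν, Integrable.of_finite⟩, integral_fintype Integrable.of_finite]
  congr 1
  refine Finset.sum_congr rfl fun x _ => ?_
  by_cases hx : μ {x} = 0
  · simp [measureReal_def, hx]
  · rw [smul_eq_mul, llr_apply_singleton hμν hx]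

end Discrete

section JointLaw

variable {Ω 𝒜 ℬ : Type*} [MeasurableSpace Ω]
  [MeasurableSpace 𝒜] [MeasurableSingletonClass 𝒜] [MeasurableSpace ℬ] [MeasurableSingletonClass ℬ]
  {μ : Measure Ω} {A : Ω → 𝒜} {B : Ω → ℬ}

lemma map_prodMk_apply_singleton (hA : Measurable A) (hB : Measurable B) (a : 𝒜) (b : ℬ) :
    μ.map (fun ω => (A ω, B ω)) {(a, b)} = μ (A ⁻¹' {a} ∩ B ⁻¹' {b}) := by
  rw [Measure.map_apply (hA.prodMk hB) (measurableSet_singleton _),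
    ← Set.singleton_prod_singleton, Set.mk_preimage_prod]

lemma map_prodMk_real_singleton (hA : Measurable A) (hB : Measurable B) (a : 𝒜) (b : ℬ) :
    (μ.map (fun ω => (A ω, B ω))).real {(a, b)} = μ.real (A ⁻¹' {a} ∩ B ⁻¹' {b}) := by
  rw [measureReal_def, map_prodMk_apply_singleton hA hB, measureReal_def]

lemma prod_map_apply_singleton [IsFiniteMeasure μ] (hA : Measurable A) (hB : Measurable B)
    (a : 𝒜) (b : ℬ) :
    (μ.map A).prod (μ.map B) {(a, b)} = μ (A ⁻¹' {a}) * μ (B ⁻¹' {b}) := by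
  rw [← Set.singleton_prod_singleton, Measure.prod_prod,
    Measure.map_apply hA (measurableSet_singleton _),
    Measure.map_apply hB (measurableSet_singleton _)]

lemma prod_map_real_singleton [IsFiniteMeasure μ] (hA : Measurable A) (hB : Measurable B)
    (a : 𝒜) (b : ℬ) :
    ((μ.map A).prod (μ.map B)).real {(a, b)} = μ.real (A ⁻¹' {a}) * μ.real (B ⁻¹' {b}) := by
  rw [measureReal_def, prod_map_apply_singleton hA hB, ENNReal.toReal_mul, measureReal_def,
    measureReal_def]

lemma map_prodMk_absolutelyContinuous_prod_map [Countable 𝒜] [Countable ℬ] [IsFiniteMeasure μ]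
    (hA : Measurable A) (hB : Measurable B) :
    μ.map (fun ω => (A ω, B ω)) ≪ (μ.map A).prod (μ.map B) := by
  refine Measure.absolutelyContinuous_of_forall_singleton fun ⟨a, b⟩ h => ?_
  rw [prod_map_apply_singleton hA hB, mul_eq_zero] at h
  rw [map_prodMk_apply_singleton hA hB]
  rcases h with h | h
  · exact measure_mono_null Set.inter_subset_left h
  · exact measure_mono_null Set.inter_subset_right h

lemma cond_map_real_apply_singleton (hA : Measurable A) (hB : Measurable B) (a : 𝒜) (b : ℬ) :
    (μ[|A ⁻¹' {a}].map B).real {b} = μ.real (A ⁻¹' {a} ∩ B ⁻¹' {b}) / μ.real (A ⁻¹' {a}) := by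
  rw [map_measureReal_apply hB (measurableSet_singleton _), measureReal_def,
    cond_apply (hA (measurableSet_singleton a)), ENNReal.toReal_mul, ENNReal.toReal_inv,
    measureReal_def, measureReal_def, inv_mul_eq_div]

lemma sum_mul_log_le_two_mul_dTVfin [Fintype ℬ] [IsFiniteMeasure μ]
    (hA : Measurable A) (hB : Measurable B) {a : 𝒜} (ha : μ (A ⁻¹' {a}) ≠ 0) :
    ∑ b, (μ.map (fun ω => (A ω, B ω))).real {(a, b)} *
        Real.log ((μ.map (fun ω => (A ω, B ω))).real {(a, b)} /
          ((μ.map A).prod (μ.map B)).real {(a, b)}) ≤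
      2 * dTVfin (μ[|A ⁻¹' {a}].map B) (μ.map B) := by
  rw [two_mul_dTVfin]
  refine Finset.sum_le_sum fun b _ => ?_
  have hpa : 0 < μ.real (A ⁻¹' {a}) := ENNReal.toReal_pos ha (measure_ne_top _ _)
  rw [map_prodMk_real_singleton hA hB, prod_map_real_singleton hA hB,
    cond_map_real_apply_singleton hA hB, map_measureReal_apply hB (measurableSet_singleton _),
    ← div_div]
  exact mul_log_div_le_abs_sub measureReal_nonneg (measureReal_mono Set.inter_subset_right)
    (div_nonneg measureReal_nonneg hpa.le)

end JointLaw

open Classical in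
theorem klDiv_joint_le_sum_tv
    {Ω 𝒜 ℬ : Type*} [MeasurableSpace Ω]
    [Fintype 𝒜] [MeasurableSpace 𝒜] [MeasurableSingletonClass 𝒜]
    [Fintype ℬ] [MeasurableSpace ℬ] [MeasurableSingletonClass ℬ]
    (μ : Measure Ω) [IsProbabilityMeasure μ]
    (A : Ω → 𝒜) (B : Ω → ℬ) (hA : Measurable A) (hB : Measurable B) :
    klDiv (μ.map (fun ω => (A ω, B ω))) ((μ.map A).prod (μ.map B)) ≤
      ENNReal.ofReal (2 * ∑ a : 𝒜,
        if μ (A ⁻¹' {a}) = 0 then 0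
        else dTVfin ((ProbabilityTheory.cond μ (A ⁻¹' {a})).map B) (μ.map B)) := by
  rw [klDiv_eq_sum_of_fintype (map_prodMk_absolutelyContinuous_prod_map hA hB),
    Fintype.sum_prod_type, Finset.mul_sum]
  refine ENNReal.ofReal_le_ofReal (Finset.sum_le_sum fun a _ => ?_)
  split_ifs with ha
  · have hjoint : ∀ b, (μ.map (fun ω => (A ω, B ω))).real {(a, b)} = 0 := fun b => by
      rw [map_prodMk_real_singleton hA hB, measureReal_def,
        measure_mono_null Set.inter_subset_left ha, ENNReal.toReal_zero]
    simp only [hjoint, zero_mul, Finset.sum_const_zero, mul_zero, le_refl]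
  · exact sum_mul_log_le_two_mul_dTVfin hA hB ha
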